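/- arXiv:1610.02397 — 2 statements merged into one kernel-verified Lean document; each statement's English description precedes it below -/
import Mathlib

section
/- Let A be a commutative ring, d a natural number, s_0,…,s_d, a_0,…,a_d ∈ A with ∑ a_i s_i = 1, and f := ∑ a_i x_i ∈ A[x_0,…,x_d], a homogeneous element of degree 1 for the grading of A[x_0,…,x_d] by total degree. Let R be the degree-zero part of the localization of A[x_0,…,x_d] away from f (the homogeneous localization at f), regarded as an A-algebra, and let ξ_i ∈ R denote the class of x_i/f. Then R is generated as an A-algebra by the elements ξ_0,…,ξ_d; equivalently, the A-subalgebra of R generated by {ξ_0,…,ξ_d} is all of R. -/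
/-! Every element of the homogeneous localization is `p / fⁿ` with `p` homogeneous of degree `n`.
Each monomial `c xᵅ` of `p` has `|α| = n`, so `c xᵅ / fⁿ = c ∏ ξᵢ ^ αᵢ`; hence `p / fⁿ` is the
value of `p` at `ξ`, and evaluation at `ξ` is onto. -/

open MvPolynomial HomogeneousLocalization

attribute [local instance] MvPolynomial.gradedAlgebra

noncomputable section

variable {A : Type*} [CommRing A] {d : ℕ}

/-- A linear form `∑ cᵢ xᵢ` is homogeneous of degree `1`. -/
lemma linear_mem_one (c : Fin (d + 1) → A) :
    (∑ i, C (c i) * X i : MvPolynomial (Fin (d + 1)) A) ∈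
      homogeneousSubmodule (Fin (d + 1)) A 1 := by
  rw [mem_homogeneousSubmodule]
  apply MvPolynomial.IsHomogeneous.sum
  intro i _
  simpa using (isHomogeneous_C _ (c i)).mul (isHomogeneous_X _ i)

variable (a : Fin (d + 1) → A)

/-- `Rloc a` is the degree-zero part of the localization of `A[x_0, …, x_d]`
away from the degree-one element `f = ∑ aᵢ xᵢ` (the homogeneous localization at `f`),
where `A[x_0, …, x_d]` is graded by total degree. -/
abbrev Rloc : Type _ := HomogeneousLocalization.Away (homogeneousSubmodule (Fin (d + 1)) A)
    (∑ i, C (a i) * X i)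

/-- `ξ a i` is the class of `xᵢ / f` in the homogeneous localization `Rloc a`. -/
def ξ (i : Fin (d + 1)) : Rloc a :=
  HomogeneousLocalization.mk ⟨1, ⟨X i, (mem_homogeneousSubmodule _ _).2 (isHomogeneous_X _ i)⟩,
    ⟨∑ j, C (a j) * X j, linear_mem_one a⟩, Submonoid.mem_powers _⟩

/-- `Rloc a` is an `A`-algebra, via `c ↦ (c·f)/f`, i.e. the composite of the structure map
`A → A[x_0, …, x_d]`, the projection to the degree-zero component, and the map from the
degree-zero component into the homogeneous localization. -/
instance : Algebra A (Rloc a) :=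
  ((fromZeroRingHom _ _).comp ((GradedRing.projZeroRingHom' _).comp
    (algebraMap A (MvPolynomial (Fin (d + 1)) A)))).toAlgebra

variable (s : Fin (d + 1) → A)

/-- `Jid s a` is the localized ideal of the section: the ideal of `Rloc a` generated by the
elements `sⱼ ξᵢ - sᵢ ξⱼ` for all `0 ≤ i, j ≤ d`. -/
def Jid : Ideal (Rloc a) :=
  Ideal.span (Set.range fun p : Fin (d + 1) × Fin (d + 1) =>
    s p.2 • ξ a p.1 - s p.1 • ξ a p.2)

lemma val_algebraMap_rloc (c : A) :
    (algebraMap A (Rloc a) c).val = Localization.mk (C c) 1 := by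
  show (HomogeneousLocalization.mk _).val = _
  rw [val_mk]
  congr 1
  simpa using DirectSum.decompose_of_mem_same _ (isHomogeneous_C _ c)

lemma val_ξ (i : Fin (d + 1)) :
    (ξ a i).val = Localization.mk (X i) ⟨∑ j, C (a j) * X j, Submonoid.mem_powers _⟩ :=
  val_mk _

lemma val_aeval_ξ_monomial (α : Fin (d + 1) →₀ ℕ) (c : A) :
    (aeval (ξ a) (monomial α c)).val =
      Localization.mk (monomial α c)
        ⟨(∑ j, C (a j) * X j) ^ α.degree, pow_mem (Submonoid.mem_powers _) _⟩ := by
  rw [aeval_monomial, ← HomogeneousLocalization.algebraMap_apply, map_mul, Finsupp.prod,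
    map_prod]
  simp only [map_pow, HomogeneousLocalization.algebraMap_apply, val_algebraMap_rloc, val_ξ,
    Localization.mk_pow, Localization.mk_prod, Localization.mk_mul, one_mul, monomial_eq,
    Finsupp.prod]
  congr 1
  ext1
  simp [Finset.prod_pow_eq_pow_sum, Finsupp.degree_apply]

lemma away_mk_eq_aeval_ξ {n : ℕ} {p : MvPolynomial (Fin (d + 1)) A}
    (hp : p ∈ homogeneousSubmodule (Fin (d + 1)) A (n • 1)) :
    Away.mk _ (linear_mem_one a) n p hp = aeval (ξ a) p := by
  apply val_injective
  conv_rhs => rw [p.as_sum, map_sum, ← HomogeneousLocalization.algebraMap_apply, map_sum]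
  simp only [HomogeneousLocalization.algebraMap_apply, val_aeval_ξ_monomial, Away.val_mk]
  conv_lhs => rw [p.as_sum, Localization.mk_sum]
  refine Finset.sum_congr rfl fun α hα => ?_
  have hdeg : α.degree = n := by
    rw [Finsupp.degree_eq_weight_one, ← mul_one n, ← smul_eq_mul]
    exact (mem_homogeneousSubmodule _ _).1 hp (mem_support_iff.1 hα)
  simp only [hdeg]

theorem stmt_2_general {A : Type*} [CommRing A] (d : ℕ) (a : Fin (d + 1) → A) :
    Algebra.adjoin A (Set.range (ξ a)) = ⊤ := by
  rw [← aeval_range, AlgHom.range_eq_top]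
  intro z
  obtain ⟨n, p, hp, rfl⟩ := Away.mk_surjective _ (linear_mem_one a) z
  exact ⟨p, (away_mk_eq_aeval_ξ a hp).symm⟩

/-- `Rloc a` is generated as an `A`-algebra by `ξ_0, …, ξ_d`. -/
theorem stmt_2 {A : Type*} [CommRing A] (d : ℕ) (s a : Fin (d + 1) → A)
    (h : ∑ i, a i * s i = 1) :
    Algebra.adjoin A (Set.range (ξ a)) = ⊤ :=
  stmt_2_general d a

end
end

section
/- Let A be a commutative ring, d a natural number, s_0,…,s_d, a_0,…,a_d ∈ A with ∑ a_i s_i = 1, and f := ∑ a_i x_i ∈ A[x_0,…,x_d]. Let R be the degree-zero part of the localization of A[x_0,…,x_d] away from f, with ξ_i ∈ R the class of x_i/f, and let J ⊆ R be the ideal generated by the elements s_j ξ_i − s_i ξ_j for all i, j. Let ev : R → A be the A-algebra homomorphism induced by the evaluation map A[x_0,…,x_d] → A, x_i ↦ s_i (which sends f to 1 and hence factors through the localization at f). Then ev is surjective and its kernel is exactly J; in particular ev induces an isomorphism of A-algebras R/J ≅ A. -/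
open MvPolynomial HomogeneousLocalization

attribute [local instance] MvPolynomial.gradedAlgebra

noncomputable section

variable {A : Type*} [CommRing A] {d : ℕ}

variable (a : Fin (d + 1) → A)

variable (s : Fin (d + 1) → A)

/-!
A homogeneous `p` of degree `n` evaluates at `ξ` to `p / fⁿ`, and every element of `R` is such a
fraction, so `R` is generated over `A` by the `ξᵢ`. Modulo `J` each `ξᵢ` is congruent to `sᵢ`,
because `∑ aⱼ sⱼ = 1 = ∑ aⱼ ξⱼ` gives `ξᵢ - sᵢ = ∑ⱼ aⱼ (sⱼ ξᵢ - sᵢ ξⱼ)`. Hence the quotient map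
`R → R/J` and `R → A → R/J` (via `ev`) agree on generators, so they are equal and `ker ev ⊆ J`;
conversely `ev` kills the generators `sⱼ ξᵢ - sᵢ ξⱼ` of `J`.
-/

lemma MvPolynomial.IsHomogeneous.eval₂_const_mul {σ R S : Type*} [CommSemiring R]
    [CommSemiring S] {p : MvPolynomial σ R} {n : ℕ} (hp : p.IsHomogeneous n) (F : R →+* S)
    (u : S) (y : σ → S) :
    MvPolynomial.eval₂ F (fun i => u * y i) p = u ^ n * MvPolynomial.eval₂ F y p := by
  rw [p.as_sum, eval₂_sum, eval₂_sum, Finset.mul_sum]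
  refine Finset.sum_congr rfl fun α hα => ?_
  have hdeg : α.degree = n := by
    rw [Finsupp.degree_eq_weight_one]
    exact hp (mem_support_iff.1 hα)
  simp only [eval₂_monomial, mul_pow, Finsupp.prod_mul]
  rw [Finsupp.prod, Finset.prod_pow_eq_pow_sum, ← Finsupp.degree_apply, hdeg]
  ring

lemma AlgHom.ker_eq_of_adjoin_eq_top {R S ι : Type*} [CommRing R] [CommRing S] [Algebra R S]
    {x : ι → S} (hx : Algebra.adjoin R (Set.range x) = ⊤) (φ : S →ₐ[R] R) {I : Ideal S}
    (hI : I ≤ RingHom.ker φ) (hxI : ∀ i, x i - algebraMap R S (φ (x i)) ∈ I) :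
    RingHom.ker φ = I := by
  refine le_antisymm (fun r hr => ?_) hI
  have hmk : Ideal.Quotient.mkₐ R I = (Algebra.ofId R (S ⧸ I)).comp φ := by
    refine AlgHom.ext_of_adjoin_eq_top hx ?_
    rintro _ ⟨i, rfl⟩
    exact Ideal.Quotient.eq.2 (hxI i)
  rw [← Ideal.Quotient.eq_zero_iff_mem, ← Ideal.Quotient.mkₐ_eq_mk R, hmk, AlgHom.comp_apply,
    RingHom.mem_ker.1 hr, map_zero]

local notation "𝔣" => (∑ i, C (a i) * X i : MvPolynomial (Fin (d + 1)) A)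

namespace Rloc

lemma val_algebraMap (c : A) :
    (algebraMap A (Rloc a) c).val = algebraMap (MvPolynomial (Fin (d + 1)) A) _ (C c) := by
  have hC : algebraMap A (MvPolynomial (Fin (d + 1)) A) c =
      ((⟨C c, isHomogeneous_C _ c⟩ : homogeneousSubmodule (Fin (d + 1)) A 0) : _) := rfl
  rw [RingHom.algebraMap_toAlgebra, RingHom.comp_apply, RingHom.comp_apply, hC,
    GradedRing.projZeroRingHom'_apply_coe, ← Localization.mk_one_eq_algebraMap]
  rfl

/- The `•` in `Jid` is the scalar action of `HomogeneousLocalization`, not the one of the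
`Algebra A (Rloc a)` instance. -/
lemma smul_eq_algebraMap_mul (c : A) (r : Rloc a) : c • r = algebraMap A (Rloc a) c * r := by
  apply val_injective
  rw [val_mul, val_algebraMap, val_smul, r.eq_num_div_den, Localization.smul_mk,
    ← Localization.mk_one_eq_algebraMap, Localization.mk_mul, one_mul, smul_eq_C_mul]

lemma val_aeval_ξ {p : MvPolynomial (Fin (d + 1)) A} {n : ℕ} (hp : p.IsHomogeneous n) :
    (aeval (ξ a) p).val = Localization.mk p ⟨𝔣 ^ n, pow_mem (Submonoid.mem_powers _) n⟩ := by
  let ι := algebraMap (MvPolynomial (Fin (d + 1)) A) (Localization.Away 𝔣)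
  have hξ : ∀ i, (ξ a i).val = Localization.mk 1 ⟨𝔣, Submonoid.mem_powers _⟩ * ι (X i) := by
    intro i
    rw [ξ, val_mk, ← Localization.mk_one_eq_algebraMap, Localization.mk_mul, one_mul, mul_one]
  have hC : (algebraMap (Rloc a) (Localization.Away 𝔣)).comp (algebraMap A (Rloc a)) =
      ι.comp C := RingHom.ext (val_algebraMap a)
  calc (aeval (ξ a) p).val
      = eval₂ (ι.comp C) (fun i => (ξ a i).val) p := by
        rw [← hC, aeval_def]
        exact eval₂_comp_left (algebraMap (Rloc a) (Localization.Away 𝔣)) _ _ p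
    _ = Localization.mk 1 ⟨𝔣, Submonoid.mem_powers _⟩ ^ n * eval₂ (ι.comp C) (ι ∘ X) p := by
        simp only [hξ]
        exact hp.eval₂_const_mul _ _ _
    _ = Localization.mk p ⟨𝔣 ^ n, pow_mem (Submonoid.mem_powers _) n⟩ := by
        rw [← eval₂_comp_left, eval₂_eta, Localization.mk_pow, ← Localization.mk_one_eq_algebraMap,
          Localization.mk_mul, one_pow, one_mul, mul_one]
        rfl

lemma aeval_ξ_surjective : Function.Surjective (aeval (R := A) (ξ a)) := by
  intro r
  obtain ⟨⟨m, num, den, j, hj⟩, rfl⟩ := mk_surjective r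
  by_cases hfj : 𝔣 ^ j = 0
  · have := HomogeneousLocalization.subsingleton (homogeneousSubmodule (Fin (d + 1)) A)
      (x := Submonoid.powers 𝔣) ⟨j, hfj⟩
    exact ⟨0, Subsingleton.elim _ _⟩
  have hfj_mem : 𝔣 ^ j ∈ homogeneousSubmodule (Fin (d + 1)) A j := by
    simpa using SetLike.pow_mem_graded j (linear_mem_one a)
  obtain rfl : m = j := DirectSum.degree_eq_of_mem_mem _ den.2 (hj ▸ hfj_mem) (hj ▸ hfj)
  refine ⟨num, val_injective _ ?_⟩
  rw [val_aeval_ξ a ((mem_homogeneousSubmodule _ _).1 num.2), val_mk]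
  congr

lemma adjoin_range_ξ : Algebra.adjoin A (Set.range (ξ a)) = ⊤ := by
  rw [Algebra.adjoin_range_eq_range_aeval, AlgHom.range_eq_top]
  exact aeval_ξ_surjective a

lemma sum_algebraMap_mul_ξ : ∑ i, algebraMap A (Rloc a) (a i) * ξ a i = 1 := by
  have hf := val_aeval_ξ a (n := 1) ((mem_homogeneousSubmodule _ _).1 (linear_mem_one a))
  simp only [map_sum, map_mul, aeval_C, aeval_X, pow_one] at hf
  apply val_injective
  rw [hf, val_one]
  exact Localization.mk_self ⟨𝔣, Submonoid.mem_powers _⟩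

end Rloc

open Rloc

lemma Jid_le_ker (ev : Rloc a →ₐ[A] A) (hev : ∀ i, ev (ξ a i) = s i) :
    Jid a s ≤ RingHom.ker ev := by
  rw [Jid, Ideal.span_le]
  rintro _ ⟨⟨i, j⟩, rfl⟩
  simp [smul_eq_algebraMap_mul, hev, mul_comm]

lemma ξ_sub_algebraMap_mem_Jid (h : ∑ i, a i * s i = 1) (i : Fin (d + 1)) :
    ξ a i - algebraMap A (Rloc a) (s i) ∈ Jid a s := by
  let ι := algebraMap A (Rloc a)
  have hsum : ξ a i - ι (s i) = ∑ j, ι (a j) * (s j • ξ a i - s i • ξ a j) := by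
    have has : ∑ j, ι (a j) * ι (s j) = 1 := by simp only [← map_mul, ← map_sum, h, map_one]
    calc ξ a i - ι (s i) = (∑ j, ι (a j) * ι (s j)) * ξ a i - ι (s i) * ∑ j, ι (a j) * ξ a j := by
          rw [has, sum_algebraMap_mul_ξ, one_mul, mul_one]
      _ = _ := by
          simp only [smul_eq_algebraMap_mul, Finset.sum_mul, Finset.mul_sum,
            ← Finset.sum_sub_distrib]
          exact Finset.sum_congr rfl fun j _ => by ring
  rw [hsum]
  exact Ideal.sum_mem _ fun j _ => Ideal.mul_mem_left _ _ (Ideal.subset_span ⟨(i, j), rfl⟩)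

/-- The `A`-algebra homomorphism `ev : Rloc a → A` induced by the evaluation map
`A[x_0, …, x_d] → A, xᵢ ↦ sᵢ` (i.e. the `A`-algebra map with `ev ξᵢ = sᵢ`) is surjective and
its kernel is exactly `J`; in particular `ev` induces an isomorphism of `A`-algebras
`Rloc a / J ≅ A`. -/
theorem stmt_4 {A : Type*} [CommRing A] (d : ℕ) (s a : Fin (d + 1) → A)
    (h : ∑ i, a i * s i = 1)
    (ev : Rloc a →ₐ[A] A) (hev : ∀ i, ev (ξ a i) = s i) :
    Function.Surjective ev ∧ RingHom.ker ev.toRingHom = Jid a s ∧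
      ∃ e : (Rloc a ⧸ Jid a s) ≃ₐ[A] A,
        ∀ r : Rloc a, e (Ideal.Quotient.mk (Jid a s) r) = ev r := by
  have hsurj : Function.Surjective ev := fun c => ⟨algebraMap A _ c, ev.commutes c⟩
  have hker : RingHom.ker ev.toRingHom = Jid a s :=
    AlgHom.ker_eq_of_adjoin_eq_top (adjoin_range_ξ a) ev (Jid_le_ker a s ev hev)
      fun i => hev i ▸ ξ_sub_algebraMap_mem_Jid a s h i
  exact ⟨hsurj, hker, (Ideal.quotientEquivAlgOfEq A hker.symm).trans
    (Ideal.quotientKerAlgEquivOfSurjective hsurj), fun r => rfl⟩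

end
end
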